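/- arXiv:1604.07267 — 7 statements merged into one kernel-verified Lean document; each statement's English description precedes it below -/
import Mathlib

section
/- Let X be a set, let F be the free group on X, and let A be an abelian group equipped with an action of F by group automorphisms. Then every function f : X → A extends in a unique way to a derivation δ : F → A, i.e., there is a unique map δ : F → A satisfying δ(gh) = (h⁻¹ • δ(g)) · δ(h) for all g, h ∈ F and δ(x) = f(x) for every generator x ∈ X. -/
/-!
Derivations `δ : G → A` correspond to sections `g ↦ (g • δ g, g)` of the projection
`A ⋊ G → G`. For `G` free on `X`, the section is the homomorphism sending `of x` to
`(of x • f x, of x)`, which gives existence; uniqueness holds because a derivation is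
determined by its values on a generating set.
-/

section Derivation

variable {G A : Type*} [Group G] [CommGroup A] [MulDistribMulAction G A]

def IsDerivation (δ : G → A) : Prop :=
  ∀ g h : G, δ (g * h) = (h⁻¹ • δ g) * δ h

namespace IsDerivation

variable {δ δ' : G → A}

theorem map_one (hδ : IsDerivation δ) : δ 1 = 1 := by
  simpa using hδ 1 1

theorem map_inv (hδ : IsDerivation δ) (g : G) : δ g⁻¹ = (g • δ g)⁻¹ := by
  have h := hδ g g⁻¹
  rw [mul_inv_cancel, hδ.map_one, inv_inv] at h
  exact eq_inv_of_mul_eq_one_right h.symm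

theorem eqOn_closure (hδ : IsDerivation δ) (hδ' : IsDerivation δ') {s : Set G}
    (hs : Set.EqOn δ δ' s) : Set.EqOn δ δ' (Subgroup.closure s) := by
  intro g hg
  induction hg using Subgroup.closure_induction with
  | mem x hx => exact hs hx
  | one => rw [hδ.map_one, hδ'.map_one]
  | mul g h _ _ ihg ihh => rw [hδ, hδ', ihg, ihh]
  | inv g _ ih => rw [hδ.map_inv, hδ'.map_inv, ih]

end IsDerivation

theorem isDerivation_inv_smul_left (Φ : G →* A ⋊[MulDistribMulAction.toMulAut G A] G)
    (hΦ : ∀ g, (Φ g).right = g) : IsDerivation fun g => g⁻¹ • (Φ g).left := by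
  intro g h
  have hmul : (Φ (g * h)).left = (Φ g).left * g • (Φ h).left := by
    rw [map_mul, SemidirectProduct.mul_left, hΦ]
    rfl
  simp only [hmul, mul_inv_rev, smul_mul', mul_smul, inv_smul_smul]

end Derivation

/-- Every function from a free generating set `X` to an abelian group `A` on which the free
group `FreeGroup X` acts by group automorphisms extends uniquely to a derivation
`δ : FreeGroup X → A`, i.e. a map with `δ (g * h) = (h⁻¹ • δ g) * δ h`. -/
theorem freeGroup_derivation_extension_unique
    {X : Type*} {A : Type*} [CommGroup A] [MulDistribMulAction (FreeGroup X) A]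
    (f : X → A) :
    ∃! δ : FreeGroup X → A,
      (∀ g h : FreeGroup X, δ (g * h) = (h⁻¹ • δ g) * δ h) ∧
      (∀ x : X, δ (FreeGroup.of x) = f x) := by
  let Φ : FreeGroup X →* A ⋊[MulDistribMulAction.toMulAut (FreeGroup X) A] FreeGroup X :=
    FreeGroup.lift fun x => ⟨FreeGroup.of x • f x, FreeGroup.of x⟩
  have hΦ : SemidirectProduct.rightHom.comp Φ = MonoidHom.id (FreeGroup X) :=
    FreeGroup.ext_hom _ _ fun x => by simp [Φ]
  have hδ := isDerivation_inv_smul_left Φ fun g => DFunLike.congr_fun hΦ g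
  have hδf (x : X) : (FreeGroup.of x)⁻¹ • (Φ (FreeGroup.of x)).left = f x := by simp [Φ]
  refine ⟨fun g => g⁻¹ • (Φ g).left, ⟨hδ, hδf⟩, fun δ' ⟨hδ', hδ'f⟩ => funext fun g => ?_⟩
  refine IsDerivation.eqOn_closure (δ := δ') hδ' hδ ?_
    (FreeGroup.closure_range_of X ▸ Subgroup.mem_top g)
  rintro _ ⟨x, rfl⟩
  exact (hδ'f x).trans (hδf x).symm
end

section
/- Let F and G be groups, let π : F → G be a surjective group homomorphism, let A be an abelian group equipped with an action of G by group automorphisms, and let F act on A via π. Let S ⊆ F be a subset whose normal closure in F equals the kernel of π. Then: (1) for every derivation δ : G → A, the composite δ ∘ π is a derivation F → A vanishing on every element of S; and (2) conversely, for every derivation δ̄ : F → A with δ̄(s) = 1 for all s ∈ S, there exists a unique derivation δ : G → A with δ̄ = δ ∘ π. -/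
/-- Let `π : F → G` be a surjective group homomorphism, let `A` be an abelian group with
an action of `G` by group automorphisms (and `F` acting via `π`), and let `S ⊆ F` have
normal closure equal to `ker π`.  Then (1) for every derivation `δ : G → A` the composite
`δ ∘ π` is a derivation of `F` vanishing on `S`, and (2) every derivation `δ̄ : F → A`
vanishing on `S` factors uniquely as `δ̄ = δ ∘ π` for a derivation `δ : G → A`. -/
theorem derivation_descends_along_surjection
    {F G : Type*} [Group F] [Group G] (π : F →* G) (hπ : Function.Surjective π)
    {A : Type*} [CommGroup A] [MulDistribMulAction G A]
    (S : Set F) (hS : Subgroup.normalClosure S = π.ker) :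
    (∀ δ : G → A, (∀ g h : G, δ (g * h) = (h⁻¹ • δ g) * δ h) →
      ((∀ f₁ f₂ : F, (δ ∘ π) (f₁ * f₂) = ((π f₂)⁻¹ • (δ ∘ π) f₁) * (δ ∘ π) f₂) ∧
        ∀ s ∈ S, (δ ∘ π) s = 1)) ∧
    (∀ δbar : F → A, (∀ f₁ f₂ : F, δbar (f₁ * f₂) = ((π f₂)⁻¹ • δbar f₁) * δbar f₂) →
      (∀ s ∈ S, δbar s = 1) →
      ∃! δ : G → A,
        (∀ g h : G, δ (g * h) = (h⁻¹ • δ g) * δ h) ∧ δbar = δ ∘ π) := by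
  have hSker : S ⊆ (π.ker : Set F) := by
    rw [← hS]; exact Subgroup.subset_normalClosure
  constructor
  · intro δ hδ
    have h1 : δ 1 = 1 := by
      have := hδ 1 1
      simp only [mul_one, inv_one, one_smul] at this
      exact (left_eq_mul.mp this)
    refine ⟨fun f₁ f₂ => by simpa using hδ (π f₁) (π f₂), fun s hs => ?_⟩
    have hk : π s = 1 := hSker hs
    simp [Function.comp, hk, h1]
  · intro δbar hder hvan
    have h1 : δbar 1 = 1 := by
      have := hder 1 1
      simp only [mul_one, map_one, inv_one, one_smul] at this
      exact (left_eq_mul.mp this)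
    -- the set of elements of ker π where δbar vanishes is a normal subgroup
    have hinv : ∀ f : F, δbar f⁻¹ = (π f • δbar f)⁻¹ := by
      intro f
      have := hder f f⁻¹
      simp only [mul_inv_cancel, h1, map_inv, inv_inv] at this
      exact eq_inv_of_mul_eq_one_right this.symm
    let T : Subgroup F :=
      { carrier := {f | π f = 1 ∧ δbar f = 1}
        one_mem' := ⟨map_one π, h1⟩
        mul_mem' := by
          rintro a b ⟨ha1, ha2⟩ ⟨hb1, hb2⟩
          refine ⟨by simp [ha1, hb1], ?_⟩
          rw [hder a b, ha2, hb2, hb1]; simp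
        inv_mem' := by
          rintro a ⟨ha1, ha2⟩
          refine ⟨by simp [ha1], ?_⟩
          rw [hinv a, ha1, ha2]; simp }
    have hTnormal : T.Normal := by
      constructor
      intro n hn g
      obtain ⟨hn1, hn2⟩ := hn
      refine ⟨by simp [hn1], ?_⟩
      have e1 : δbar (g * n * g⁻¹) = (π g⁻¹)⁻¹ • δbar (g * n) * δbar g⁻¹ :=
        hder (g * n) g⁻¹
      rw [e1, hder g n, hn1, hn2, hinv g]
      simp
    have hker : ∀ f : F, π f = 1 → δbar f = 1 := by
      intro f hf
      have hle : Subgroup.normalClosure S ≤ T :=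
        Subgroup.normalClosure_le_normal (fun s hs => ⟨hSker hs, hvan s hs⟩)
      have : f ∈ Subgroup.normalClosure S := by rw [hS]; exact hf
      exact (hle this).2
    have welldef : ∀ f f' : F, π f = π f' → δbar f = δbar f' := by
      intro f f' hff
      have hk : π (f⁻¹ * f') = 1 := by simp [hff]
      have : δbar (f * (f⁻¹ * f')) = (π (f⁻¹ * f'))⁻¹ • δbar f * δbar (f⁻¹ * f') :=
        hder f (f⁻¹ * f')
      rw [hk, hker _ hk] at this
      simpa using this.symm
    set δ : G → A := fun g => δbar (hπ g).choose with hδdef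
    have hcomp : ∀ f : F, δ (π f) = δbar f := fun f =>
      welldef _ _ ((hπ (π f)).choose_spec)
    refine ⟨δ, ⟨?_, ?_⟩, ?_⟩
    · intro g h
      obtain ⟨x, rfl⟩ := hπ g
      obtain ⟨y, rfl⟩ := hπ h
      rw [← map_mul, hcomp, hcomp, hcomp]
      exact hder x y
    · funext f; exact (hcomp f).symm
    · rintro δ' ⟨_, heq⟩
      funext g
      obtain ⟨x, rfl⟩ := hπ g
      rw [hcomp]; exact (congrFun heq x).symm
end

section
/- Let p be a prime, let G be a group, let A be a normal abelian subgroup of G, and let δ : G → A be a derivation with respect to the conjugation action. Let D denote the normal closure in G of the image δ(G). Then for every x ∈ G, the element δ(x^p) lies in the subgroup of G generated by the p-th powers of elements of D together with the iterated commutator subgroup [D, G, …, G] with p−1 copies of G (defined by [D, G] and inductively [D, G, …, G] = [[D, G, …, G], G]). -/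
/-!
Write `A` additively and let `φ` be conjugation by `x`. The derivation rule becomes
`δ(x ^ (n + 1)) = φ (δ(x ^ n)) + δ x`, so `δ(x ^ n) = (1 + φ + ⋯ + φ ^ (n - 1)) (δ x)`.
Substituting `φ = 1 + ψ` rewrites this as `∑_{j < n} C(n, j + 1) ψ ^ j (δ x)`, and `ψ ^ j (δ x)`,
a `j`-fold commutator of `δ x` with `x⁻¹`, lies in `[D, G, …, G]` with `j` copies of `G`.
For `n = p` the coefficients with `j < p - 1` are divisible by `p` and the last one is `1`.
-/

/-- The iterated commutator subgroup `[H, G, …, G]` with `n` copies of `G`: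
`iteratedCommutator H 0 = H` and `iteratedCommutator H (n+1) = ⁅iteratedCommutator H n, G⁆`. -/
def iteratedCommutator {G : Type*} [Group G] (H : Subgroup G) : ℕ → Subgroup G
  | 0 => H
  | n + 1 => ⁅iteratedCommutator H n, (⊤ : Subgroup G)⁆

open Finset
open scoped IsMulCommutative commutatorElement

section

theorem geom_sum_add_one_eq_sum_choose {R : Type*} [Semiring R] (x : R) (n : ℕ) :
    ∑ i ∈ range n, (x + 1) ^ i = ∑ i ∈ range n, (n.choose (i + 1) : R) * x ^ i := by
  simpa [Polynomial.aeval_comp] using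
    congrArg (Polynomial.aeval x) (Polynomial.geom_sum_X_comp_X_add_one_eq_sum (R := ℕ) n)

variable {G : Type*} [Group G]

theorem iteratedCommutator_le (H : Subgroup G) [H.Normal] : ∀ n, iteratedCommutator H n ≤ H
  | 0 => le_rfl
  | n + 1 => (Subgroup.commutator_mono (iteratedCommutator_le H n) le_rfl).trans
      (Subgroup.commutator_le_left H ⊤)

theorem pow_choose_succ_mem_closure {p : ℕ} (hp : p.Prime) (H : Subgroup G) [H.Normal]
    {j : ℕ} (hj : j < p) {c : G} (hc : c ∈ iteratedCommutator H j) :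
    c ^ p.choose (j + 1) ∈
      Subgroup.closure ({y | ∃ d ∈ H, y = d ^ p} ∪ (iteratedCommutator H (p - 1) : Set G)) := by
  apply Subgroup.subset_closure
  rcases (Nat.succ_le_of_lt hj).lt_or_eq with hjp | hjp
  · obtain ⟨m, hm⟩ := hp.dvd_choose_self j.succ_ne_zero hjp
    exact .inl ⟨c ^ m, H.pow_mem (iteratedCommutator_le H j hc) m, by rw [hm, pow_mul']⟩
  · obtain rfl : j = p - 1 := by omega
    rw [Nat.sub_add_cancel hp.one_le, Nat.choose_self, pow_one]
    exact .inr hc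

namespace Subgroup

variable (A : Subgroup G) [A.Normal] [IsMulCommutative A]

def conjEnd (g : G) : Module.End ℤ (Additive A) :=
  (MonoidHom.toAdditive (MulAut.conjNormal (g⁻¹)).toMonoidHom).toIntLinearMap

theorem coe_toMul_conjEnd (g : G) (a : Additive A) :
    ((A.conjEnd g a).toMul : G) = g⁻¹ * a.toMul * g := by
  change ((MulAut.conjNormal g⁻¹ a.toMul : A) : G) = _
  rw [MulAut.conjNormal_apply, inv_inv]

theorem coe_toMul_conjEnd_sub_one (g : G) (a : Additive A) :
    (((A.conjEnd g - 1) a).toMul : G) = ⁅g⁻¹, (a.toMul : G)⁆ := by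
  rw [LinearMap.sub_apply, Module.End.one_apply, toMul_sub, coe_div,
    coe_toMul_conjEnd, commutatorElement_def, inv_inv, div_eq_mul_inv]

theorem coe_toMul_conjEnd_sub_one_pow_mem {H : Subgroup G} (g : G) {a : A} (ha : (a : G) ∈ H) :
    ∀ j, ((((A.conjEnd g - 1) ^ j) (.ofMul a)).toMul : G) ∈ iteratedCommutator H j
  | 0 => ha
  | j + 1 => by
    rw [pow_succ', Module.End.mul_apply, coe_toMul_conjEnd_sub_one,
      iteratedCommutator, commutator_comm]
    exact commutator_mem_commutator (mem_top _) (coe_toMul_conjEnd_sub_one_pow_mem g ha j)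

end Subgroup

def IsConjDerivation (A : Subgroup G) (δ : G → A) : Prop :=
  ∀ g h : G, (δ (g * h) : G) = h⁻¹ * δ g * h * δ h

namespace IsConjDerivation

variable {A : Subgroup G} {δ : G → A}

theorem map_one (hδ : IsConjDerivation A δ) : δ 1 = 1 := by
  have h := hδ 1 1
  rw [one_mul, inv_one, one_mul, mul_one, left_eq_mul] at h
  exact Subtype.ext h

variable [A.Normal] [IsMulCommutative A]

theorem ofMul_map_mul (hδ : IsConjDerivation A δ) (g h : G) :
    Additive.ofMul (δ (g * h)) = A.conjEnd h (.ofMul (δ g)) + .ofMul (δ h) := by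
  apply Additive.toMul.injective
  ext
  simp [hδ g h, Subgroup.coe_toMul_conjEnd]

theorem ofMul_map_pow (hδ : IsConjDerivation A δ) (x : G) (n : ℕ) :
    Additive.ofMul (δ (x ^ n)) = (∑ k ∈ range n, A.conjEnd x ^ k) (.ofMul (δ x)) := by
  induction n with
  | zero => simp [hδ.map_one]
  | succ n ih =>
    rw [pow_succ, hδ.ofMul_map_mul, ih, geom_sum_succ]
    rfl

theorem map_pow_eq_prod (hδ : IsConjDerivation A δ) (x : G) (n : ℕ) :
    δ (x ^ n) =
      ∏ j ∈ range n, (((A.conjEnd x - 1) ^ j) (.ofMul (δ x))).toMul ^ n.choose (j + 1) := by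
  have h := hδ.ofMul_map_pow x n
  rw [← sub_add_cancel (A.conjEnd x) 1, geom_sum_add_one_eq_sum_choose] at h
  rw [← toMul_ofMul (δ (x ^ n)), h]
  simp only [LinearMap.coe_sum, Finset.sum_apply, toMul_sum, Module.End.mul_apply,
    Module.End.natCast_apply, toMul_nsmul]

end IsConjDerivation

end

/-- If `A` is a normal abelian subgroup of `G`, `δ : G → A` is a derivation for the
conjugation action and `D` is the normal closure of the image of `δ`, then for every `x ∈ G`
the element `δ (x ^ p)` lies in the subgroup generated by `p`-th powers of elements of `D`
together with the iterated commutator `[D, G, …, G]` with `p - 1` copies of `G`. -/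
theorem derivation_pow_p_mem
    {p : ℕ} (hp : p.Prime) {G : Type*} [Group G] (A : Subgroup G) (hA : A.Normal)
    (hab : ∀ a b : G, a ∈ A → b ∈ A → a * b = b * a)
    (δ : G → A)
    (hδ : ∀ g h : G, (δ (g * h) : G) = h⁻¹ * (δ g : G) * h * (δ h : G)) :
    ∀ x : G,
      (δ (x ^ p) : G) ∈
        Subgroup.closure
          ({y : G | ∃ d ∈ Subgroup.normalClosure (Set.range fun g : G => (δ g : G)),
              y = d ^ p} ∪
            (iteratedCommutator
              (Subgroup.normalClosure (Set.range fun g : G => (δ g : G))) (p - 1) :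
                Set G)) := by
  intro x
  have : IsMulCommutative A := isMulCommutative_iff.mpr fun a b => Subtype.ext (hab a b a.2 b.2)
  have hδx : (δ x : G) ∈ Subgroup.normalClosure (Set.range fun g : G => (δ g : G)) :=
    Subgroup.subset_normalClosure (Set.mem_range_self x)
  refine (Subgroup.mem_comap (f := A.subtype)).mp ?_
  rw [IsConjDerivation.map_pow_eq_prod hδ]
  refine Subgroup.prod_mem _ fun j hj => ?_
  rw [Subgroup.mem_comap, map_pow]
  exact pow_choose_succ_mem_closure hp _ (mem_range.mp hj)
    (A.coe_toMul_conjEnd_sub_one_pow_mem x hδx j)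
end

section
/- Let G be a group, let A be a normal abelian subgroup of G, let δ : G → A be a derivation with respect to the conjugation action, and let D denote the normal closure in G of the image δ(G). Let i ≥ 1 and suppose the iterated commutator subgroup [A, G, …, G] with i copies of G is trivial. Then for every x in γ_i(G), the i-th term of the lower central series of G, the element δ(x) lies in the iterated commutator subgroup [D, G, …, G] with i−1 copies of G (which for i = 1 is D itself). -/
/-!
For a derivation `δ` of the conjugation action, `φ g = g * δ g` is an endomorphism of `G` with
`δ g = g⁻¹ * φ g`, and `φ` induces the identity on `G ⧸ D`. An endomorphism that is trivial
modulo a normal subgroup `N` is trivial on `γ_{n+1}(G)` modulo `[N, G, …, G]` (`n` copies of `G`):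
for `y ∈ γ_{n+1}(G)` the defect `y⁻¹ φ y` is central modulo the next term by induction, and
`g⁻¹ φ g ∈ N` commutes with `y` modulo it because `[N, γ_{n+1}(G)] ≤ [N, G, …, G]` by the three
subgroups lemma, so `φ ⁅y, g⁆ ≡ ⁅y, g⁆`.
-/

open scoped commutatorElement

section

variable {G : Type*} [Group G]

theorem commutatorElement_mul_mul_of_mem_center {y g c d : G} (hc : c ∈ Subgroup.center G)
    (hyd : Commute y d) : ⁅y * c, g * d⁆ = ⁅y, g⁆ := by
  calc ⁅y * c, g * d⁆ = y * (c * (g * d) * c⁻¹) * y⁻¹ * d⁻¹ * g⁻¹ := by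
        simp only [commutatorElement_def]; group
    _ = y * g * (d * y⁻¹) * d⁻¹ * g⁻¹ := by
        rw [← Subgroup.mem_center_iff.mp hc (g * d)]; group
    _ = ⁅y, g⁆ := by rw [← hyd.inv_left.eq, commutatorElement_def]; group

namespace QuotientGroup

theorem map_mk'_eq_bot_iff {N K : Subgroup G} [N.Normal] : K.map (mk' N) = ⊥ ↔ K ≤ N := by
  rw [Subgroup.map_eq_bot_iff, ker_mk']

theorem commute_mk_iff {N : Subgroup G} [N.Normal] {x y : G} :
    Commute (x : G ⧸ N) y ↔ ⁅x, y⁆ ∈ N := by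
  rw [← commutatorElement_eq_one_iff_commute, ← eq_one_iff, ← mk'_apply, ← mk'_apply, ← mk'_apply,
    map_commutatorElement]

theorem mk_mem_center_of_commutator_le {N H : Subgroup G} [N.Normal]
    (hH : ⁅H, (⊤ : Subgroup G)⁆ ≤ N) {x : G} (hx : x ∈ H) : (x : G ⧸ N) ∈ Subgroup.center _ :=
  Subgroup.mem_center_iff.mpr <| forall_mk.mpr fun y =>
    (commute_mk_iff.mpr <| hH <| Subgroup.commutator_mem_commutator hx (Subgroup.mem_top y)).symm

end QuotientGroup

namespace Subgroup

theorem commutator_commutator_le_of_rotate {H₁ H₂ H₃ N : Subgroup G} [N.Normal]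
    (h1 : ⁅⁅H₂, H₃⁆, H₁⁆ ≤ N) (h2 : ⁅⁅H₃, H₁⁆, H₂⁆ ≤ N) : ⁅⁅H₁, H₂⁆, H₃⁆ ≤ N := by
  simp only [← QuotientGroup.map_mk'_eq_bot_iff, map_commutator] at h1 h2 ⊢
  exact commutator_commutator_eq_bot_of_rotate h1 h2

end Subgroup

theorem iteratedCommutator_succ (H : Subgroup G) (n : ℕ) :
    iteratedCommutator H (n + 1) = ⁅iteratedCommutator H n, ⊤⁆ :=
  rfl

theorem iteratedCommutator_succ' (H : Subgroup G) :
    ∀ n, iteratedCommutator H (n + 1) = iteratedCommutator ⁅H, ⊤⁆ n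
  | 0 => rfl
  | n + 1 => by rw [iteratedCommutator_succ, iteratedCommutator_succ', iteratedCommutator_succ]

instance iteratedCommutator_normal (H : Subgroup G) [H.Normal] :
    ∀ n, (iteratedCommutator H n).Normal
  | 0 => ‹H.Normal›
  | n + 1 => by
    have := iteratedCommutator_normal H n
    rw [iteratedCommutator_succ]
    infer_instance

theorem commutator_lowerCentralSeries_le_iteratedCommutator :
    ∀ (N : Subgroup G) [N.Normal] (n : ℕ),
      ⁅N, (⊤ : Subgroup G).lowerCentralSeries n⁆ ≤ iteratedCommutator N (n + 1)
  | _, _, 0 => le_rfl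
  | N, _, n + 1 => by
    rw [Subgroup.lowerCentralSeries_succ, Subgroup.commutator_comm]
    refine Subgroup.commutator_commutator_le_of_rotate ?_ ?_
    · rw [Subgroup.commutator_comm ⊤ N, iteratedCommutator_succ' N (n + 1)]
      exact commutator_lowerCentralSeries_le_iteratedCommutator ⁅N, ⊤⁆ n
    · exact Subgroup.commutator_mono
        (commutator_lowerCentralSeries_le_iteratedCommutator N n) le_rfl

theorem inv_mul_map_mem_iteratedCommutator {N : Subgroup G} [N.Normal] {φ : G →* G}
    (hφ : ∀ g, g⁻¹ * φ g ∈ N) (n : ℕ) :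
    ∀ x ∈ (⊤ : Subgroup G).lowerCentralSeries n, x⁻¹ * φ x ∈ iteratedCommutator N n := by
  induction n with
  | zero => exact fun x _ => hφ x
  | succ n ih =>
    let π := QuotientGroup.mk' (iteratedCommutator N (n + 1))
    have hπ : ∀ z, π (φ z) = π z * π (z⁻¹ * φ z) := fun z => by
      rw [← map_mul, mul_inv_cancel_left]
    -- `x⁻¹ * φ x` lies in the kernel of `π` iff `π x = π (φ x)`, an equalizer of homomorphisms
    suffices hle : (⊤ : Subgroup G).lowerCentralSeries (n + 1) ≤ π.eqLocus (π.comp φ) from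
      fun x hx => QuotientGroup.eq.mp (hle hx)
    rw [Subgroup.lowerCentralSeries_succ, Subgroup.commutator_le]
    intro y hy g _
    have hcentral : π (y⁻¹ * φ y) ∈ Subgroup.center _ :=
      QuotientGroup.mk_mem_center_of_commutator_le le_rfl (ih y hy)
    have hcomm : Commute (π y) (π (g⁻¹ * φ g)) := by
      refine QuotientGroup.commute_mk_iff.mpr
        (commutator_lowerCentralSeries_le_iteratedCommutator N n ?_)
      rw [Subgroup.commutator_comm]
      exact Subgroup.commutator_mem_commutator hy (hφ g)
    change π ⁅y, g⁆ = π (φ ⁅y, g⁆)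
    rw [map_commutatorElement φ, map_commutatorElement π (φ y), hπ, hπ,
      commutatorElement_mul_mul_of_mem_center hcentral hcomm, map_commutatorElement]

def derivationHom (δ : G → G) (hδ : ∀ g h : G, δ (g * h) = h⁻¹ * δ g * h * δ h) : G →* G where
  toFun g := g * δ g
  map_one' := by
    have h := hδ 1 1
    rw [one_mul, inv_one, one_mul, mul_one] at h
    rw [one_mul, left_eq_mul.mp h]
  map_mul' g h := by rw [hδ]; group

end

theorem derivation_lowerCentralSeries_mem_general
    {G : Type*} [Group G] (A : Subgroup G)
    (δ : G → A)
    (hδ : ∀ g h : G, (δ (g * h) : G) = h⁻¹ * (δ g : G) * h * (δ h : G))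
    (i : ℕ) :
    ∀ x ∈ (⊤ : Subgroup G).lowerCentralSeries (i - 1),
      (δ x : G) ∈
        iteratedCommutator
          (Subgroup.normalClosure (Set.range fun g : G => (δ g : G))) (i - 1) := by
  have hdefect : ∀ g, g⁻¹ * derivationHom (fun g => (δ g : G)) hδ g = δ g :=
    fun g => inv_mul_cancel_left g _
  intro x hx
  rw [← hdefect]
  exact inv_mul_map_mem_iteratedCommutator
    (fun g => hdefect g ▸ Subgroup.subset_normalClosure ⟨g, rfl⟩) (i - 1) x hx

/-- If `A` is a normal abelian subgroup of `G`, `δ : G → A` is a derivation for the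
conjugation action, `D` is the normal closure of the image of `δ`, and the iterated
commutator `[A, G, …, G]` with `i` copies of `G` is trivial (`i ≥ 1`), then `δ` maps the
`i`-th term `γ_i(G)` of the lower central series (which is `lowerCentralSeries G (i - 1)`)
into the iterated commutator `[D, G, …, G]` with `i - 1` copies of `G`. -/
theorem derivation_lowerCentralSeries_mem
    {G : Type*} [Group G] (A : Subgroup G) (hA : A.Normal)
    (hab : ∀ a b : G, a ∈ A → b ∈ A → a * b = b * a)
    (δ : G → A)
    (hδ : ∀ g h : G, (δ (g * h) : G) = h⁻¹ * (δ g : G) * h * (δ h : G))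
    (i : ℕ) (hi : 1 ≤ i)
    (htriv : iteratedCommutator A i = ⊥) :
    ∀ x ∈ (⊤ : Subgroup G).lowerCentralSeries (i - 1),
      (δ x : G) ∈
        iteratedCommutator
          (Subgroup.normalClosure (Set.range fun g : G => (δ g : G))) (i - 1) :=
  derivation_lowerCentralSeries_mem_general A δ hδ i
end

section
/- Let G be a nonabelian finite thin p-group (p prime). Then the Frattini subgroup of G equals the commutator subgroup of G, i.e., Φ(G) = [G, G], and the abelianization G/[G, G] is elementary abelian of order p². -/
/-- A finite `p`-group is *thin* if every antichain in the lattice of its normal subgroups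
contains at most `p + 1` elements. -/
def IsThinPGroup (p : ℕ) (G : Type*) [Group G] : Prop :=
  ∀ S : Set (Subgroup G), (∀ N ∈ S, N.Normal) → IsAntichain (· ≤ ·) S → S.ncard ≤ p + 1

/-!
In a nilpotent group every maximal subgroup is normal of prime index, so `G' ≤ Φ(G)`; hence
`Gᵃᵇ = G ⧸ G'` is not cyclic, for otherwise `G` itself would be cyclic. Subgroups of `Gᵃᵇ`
pull back to normal subgroups of `G`, so `Gᵃᵇ` has no antichain of `p + 2` subgroups. But a
noncyclic abelian `p`-group of order at least `p ^ 3` has one: take `x` of maximal order and `z`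
of order `p` outside `⟨x⟩`; the cyclic subgroups `⟨x * z ^ i⟩` (`i < p`) and `⟨z⟩` are pairwise
incomparable, and one more subgroup of order `p` is generated by `x ^ (|x| / p) * z` when
`p ^ 2 ∣ |x|`, or by any element outside `⟨x, z⟩` when the exponent is `p`. So `Gᵃᵇ` is
elementary abelian of order `p ^ 2`, its Frattini subgroup is trivial, and `Φ(G) ≤ G'`.
-/

open Subgroup

section Group

variable {G : Type*} [Group G]

theorem Subgroup.isCoatom_of_index_prime {H : Subgroup G} (h : H.index.Prime) : IsCoatom H := by
  have : H.FiniteIndex := ⟨h.ne_zero⟩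
  refine ⟨fun hH => by simp [hH, Nat.not_prime_one] at h, fun K hK => ?_⟩
  rcases h.eq_one_or_self_of_dvd _ (index_dvd_of_le hK.le) with hK1 | hKH
  · exact index_eq_one.mp hK1
  · exact absurd hKH (index_strictAnti hK).ne

theorem isCyclic_of_isSimpleOrder_subgroup [IsSimpleOrder (Subgroup G)] : IsCyclic G := by
  have : Nontrivial G := Subgroup.nontrivial_iff.mp inferInstance
  obtain ⟨g, hg⟩ := exists_ne (1 : G)
  have hg_top := (IsSimpleOrder.eq_bot_or_eq_top (zpowers g)).resolve_left (zpowers_ne_bot.mpr hg)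
  exact ⟨g, (eq_top_iff' _).mp hg_top⟩

theorem commutator_le_frattini [Group.IsNilpotent G] : commutator G ≤ frattini G := by
  refine le_iInf₂ fun M hM => ?_
  have : M.Normal := Group.normalizerCondition_of_isNilpotent.normal_of_coatom M hM
  let e : Subgroup (G ⧸ M) ≃o Set.Ici M := QuotientGroup.comapMk'OrderIso M
  have : IsSimpleOrder (Subgroup (G ⧸ M)) :=
    e.isSimpleOrder_iff.mpr (Set.isSimpleOrder_Ici_iff_isCoatom.mpr hM)
  have := isCyclic_of_isSimpleOrder_subgroup (G := G ⧸ M)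
  exact Normal.quotient_commutative_iff_commutator_le.mp inferInstance

theorem IsCyclic.of_quotient_of_le_frattini [Finite G] {N : Subgroup G} [N.Normal]
    (hN : N ≤ frattini G) [IsCyclic (G ⧸ N)] : IsCyclic G := by
  obtain ⟨q, hq⟩ := IsCyclic.exists_generator (α := G ⧸ N)
  obtain ⟨g, rfl⟩ := QuotientGroup.mk'_surjective N q
  have hgN : N ⊔ zpowers g = ⊤ := by
    rw [← QuotientGroup.comap_map_mk', MonoidHom.map_zpowers, (eq_top_iff' _).mpr hq, comap_top]
  have hg : zpowers g = ⊤ := by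
    refine frattini_nongenerating (top_unique ?_)
    rw [← hgN, sup_comm]
    exact sup_le_sup_left hN _
  exact ⟨g, (eq_top_iff' _).mp hg⟩

theorem IsThinPGroup.of_surjective {p : ℕ} {H : Type*} [Group H] (hG : IsThinPGroup p G)
    (f : G →* H) (hf : Function.Surjective f) : IsThinPGroup p H := by
  intro S hSn hS
  rw [← Set.ncard_image_of_injective S (comap_injective hf)]
  refine hG _ ?_ (hS.image _ fun _ _ h => (comap_le_comap_of_surjective hf).mp h)
  rintro _ ⟨N, hN, rfl⟩
  exact (hSn N hN).comap f

theorem mem_zpowers_of_mem_zpowers_of_prime {g w : G} (hg : (orderOf g).Prime) (hw : w ≠ 1)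
    (h : w ∈ zpowers g) : g ∈ zpowers w := by
  obtain ⟨k, rfl⟩ := mem_zpowers_iff.mp h
  rw [mem_zpowers_zpow_iff, Int.gcd_comm, ← Int.isCoprime_iff_gcd_eq_one,
    (Nat.prime_iff_prime_int.mp hg).coprime_iff_not_dvd]
  exact fun hdvd => hw (orderOf_dvd_iff_zpow_eq_one.mp hdvd)

theorem disjoint_zpowers_of_prime {x z : G} (hz : (orderOf z).Prime) (hzx : z ∉ zpowers x) :
    Disjoint (zpowers x) (zpowers z) :=
  disjoint_def.mpr fun hwx hwz => by_contra fun hw =>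
    hzx (zpowers_le.mpr hwx (mem_zpowers_of_mem_zpowers_of_prime hz hw hwz))

theorem exists_isAntichain_ncard_eq {ι : Type*} (g : ι → G)
    (h : Pairwise fun i j => g i ∉ zpowers (g j)) :
    ∃ S : Set (Subgroup G), IsAntichain (· ≤ ·) S ∧ S.ncard = Nat.card ι := by
  have hinj : Function.Injective fun i => zpowers (g i) := fun i j hij =>
    by_contra fun hne => h hne (by simpa [hij] using mem_zpowers (g i))
  refine ⟨Set.range fun i => zpowers (g i), ?_, Set.ncard_range_of_injective hinj⟩
  rintro _ ⟨i, rfl⟩ _ ⟨j, rfl⟩ hne hle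
  exact h (fun hij => hne (by rw [hij])) (hle (mem_zpowers (g i)))

theorem Subgroup.card_sup_le_mul (H K : Subgroup G) [K.Normal] :
    Nat.card ↥(H ⊔ K) ≤ Nat.card H * Nat.card K := by
  have := Set.natCard_mul_le (s := (H : Set G)) (t := K)
  rwa [← mul_normal] at this

variable [Finite G] {p : ℕ} [Fact p.Prime]

theorem orderOf_eq_prime_of_card_eq_sq (hG : Nat.card G = p ^ 2) (hnc : ¬IsCyclic G) {g : G}
    (hg : g ≠ 1) : orderOf g = p := by
  obtain ⟨k, hk, hgk⟩ := (Nat.dvd_prime_pow Fact.out).mp (hG ▸ orderOf_dvd_natCard g)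
  interval_cases k
  · exact absurd (orderOf_eq_one_iff.mp (by simpa using hgk)) hg
  · simpa using hgk
  · exact absurd (isCyclic_of_orderOf_eq_card g (hgk.trans hG.symm)) hnc

theorem frattini_eq_bot_of_card_eq_sq (hG : Nat.card G = p ^ 2) (hnc : ¬IsCyclic G) :
    frattini G = ⊥ := by
  have hp := (Fact.out : p.Prime)
  have : Nontrivial G := by
    rw [← Finite.one_lt_card_iff_nontrivial, hG]
    exact Nat.one_lt_pow two_ne_zero hp.one_lt
  obtain ⟨x, hx⟩ := exists_ne (1 : G)
  obtain ⟨z, hzx⟩ : ∃ z, z ∉ zpowers x := not_forall.mp fun h => hnc ⟨x, h⟩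
  have hz : z ≠ 1 := fun h => hzx (h ▸ one_mem _)
  have hcoatom {g : G} (hg : g ≠ 1) : IsCoatom (zpowers g) := by
    refine isCoatom_of_index_prime ?_
    have := card_mul_index (zpowers g)
    rw [Nat.card_zpowers, orderOf_eq_prime_of_card_eq_sq hG hnc hg, hG, sq] at this
    rwa [Nat.eq_of_mul_eq_mul_left hp.pos this]
  have hxz := disjoint_zpowers_of_prime (by rwa [orderOf_eq_prime_of_card_eq_sq hG hnc hz]) hzx
  exact eq_bot_iff.mpr ((le_inf (frattini_le_coatom (hcoatom hx))
    (frattini_le_coatom (hcoatom hz))).trans hxz.eq_bot.le)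

end Group

section CommGroup

variable {A : Type*} [CommGroup A]

theorem orderOf_dvd_sub_of_zpow_mul_zpow_eq {x z : A} (hxz : Disjoint (zpowers x) (zpowers z))
    {a b c d : ℤ} (h : x ^ a * z ^ b = x ^ c * z ^ d) :
    (orderOf x : ℤ) ∣ a - c ∧ (orderOf z : ℤ) ∣ b - d := by
  have hsplit : x ^ (a - c) = z ^ (d - b) := by
    rw [zpow_sub, zpow_sub, ← div_eq_mul_inv, ← div_eq_mul_inv, div_eq_div_iff_mul_eq_mul, h,
      mul_comm]
  have hx : x ^ (a - c) = 1 :=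
    disjoint_def.mp hxz (zpow_mem_zpowers x _) (hsplit ▸ zpow_mem_zpowers z _)
  refine ⟨orderOf_dvd_iff_zpow_eq_one.mpr hx, ?_⟩
  rw [← neg_sub, dvd_neg, orderOf_dvd_iff_zpow_eq_one, ← hsplit, hx]

theorem exists_zmod_of_mem_zpowers {p : ℕ} {x z : A} (hxz : Disjoint (zpowers x) (zpowers z))
    (hx : p ∣ orderOf x) (hz : p ∣ orderOf z) {a b c d : ℤ}
    (h : x ^ a * z ^ b ∈ zpowers (x ^ c * z ^ d)) :
    ∃ k : ZMod p, (a : ZMod p) = k * c ∧ (b : ZMod p) = k * d := by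
  obtain ⟨k, hk⟩ := mem_zpowers_iff.mp h
  rw [mul_zpow, ← zpow_mul, ← zpow_mul] at hk
  obtain ⟨ha, hb⟩ := orderOf_dvd_sub_of_zpow_mul_zpow_eq hxz hk
  have hpx := (Int.natCast_dvd_natCast.mpr hx).trans ha
  have hpz := (Int.natCast_dvd_natCast.mpr hz).trans hb
  rw [← ZMod.intCast_eq_intCast_iff_dvd_sub, Int.cast_mul] at hpx hpz
  exact ⟨k, by rw [hpx, mul_comm], by rw [hpz, mul_comm]⟩

variable {p : ℕ} [Fact p.Prime]

theorem exists_isAntichain_ncard_eq_add_two_of_disjoint_zpowers {x z w : A}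
    (hxz : Disjoint (zpowers x) (zpowers z)) (hx : p ∣ orderOf x) (hz : orderOf z = p)
    (hw : orderOf w = p) (hwz : w ∉ zpowers z)
    (hwx : ∀ i : ℕ, w ∉ zpowers (x * z ^ i)) :
    ∃ S : Set (Subgroup A), IsAntichain (· ≤ ·) S ∧ S.ncard = p + 2 := by
  have hp : p.Prime := Fact.out
  have coords {a b c d : ℤ} (h : x ^ a * z ^ b ∈ zpowers (x ^ c * z ^ d)) :
      ∃ k : ZMod p, (a : ZMod p) = k * c ∧ (b : ZMod p) = k * d :=
    exists_zmod_of_mem_zpowers hxz hx hz.symm.dvd h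
  have hz_notMem (i : ℕ) : z ∉ zpowers (x * z ^ i) := fun h => by
    obtain ⟨k, h0, h1⟩ := coords (a := 0) (b := 1) (c := 1) (d := i) (by simpa using h)
    push_cast at h0 h1
    exact one_ne_zero (by linear_combination h1 - (i : ZMod p) * h0)
  have hxzi_notMem_z (i : ℕ) : x * z ^ i ∉ zpowers z := fun h => by
    obtain ⟨k, h1, -⟩ := coords (a := 1) (b := i) (c := 0) (d := 1) (by simpa using h)
    push_cast at h1
    exact one_ne_zero (by linear_combination h1)
  have hxzi_notMem_xzj {i j : ZMod p} (hij : i ≠ j) : x * z ^ i.val ∉ zpowers (x * z ^ j.val) :=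
    fun h => by
      obtain ⟨k, h1, h2⟩ := coords (a := 1) (b := i.val) (c := 1) (d := j.val)
        (by simpa only [zpow_one, zpow_natCast] using h)
      push_cast [ZMod.natCast_zmod_val] at h1 h2
      exact hij (by linear_combination h2 - j * h1)
  let g : Option (Option (ZMod p)) → A
    | none => z
    | some none => w
    | some (some i) => x * z ^ i.val
  have hw_prime : (orderOf w).Prime := hw ▸ hp
  have hg : Pairwise fun i j => g i ∉ zpowers (g j) := by
    rintro (_ | _ | i) (_ | _ | j) hij
    · exact absurd rfl hij
    · exact fun h => hwz (mem_zpowers_of_mem_zpowers_of_prime hw_prime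
        (fun h1 => hz_notMem 0 (by simp [h1])) h)
    · exact hz_notMem j.val
    · exact hwz
    · exact absurd rfl hij
    · exact hwx j.val
    · exact hxzi_notMem_z i.val
    · exact fun h => hwx i.val (mem_zpowers_of_mem_zpowers_of_prime hw_prime
        (fun h1 => hxzi_notMem_z i.val (h1 ▸ one_mem _)) h)
    · exact hxzi_notMem_xzj fun e => hij (by rw [e])
  simpa using exists_isAntichain_ncard_eq g hg

end CommGroup

section FiniteCommGroup

variable {A : Type*} [CommGroup A] [Finite A] {p : ℕ} [Fact p.Prime]

theorem IsPGroup.exists_orderOf_eq_prime_notMem_zpowers (hA : IsPGroup p A) {x : A}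
    (hx : orderOf x = Monoid.exponent A) (hx_top : zpowers x ≠ ⊤) :
    ∃ z, orderOf z = p ∧ z ∉ zpowers x := by
  have : Nontrivial (A ⧸ zpowers x) := QuotientGroup.nontrivial_iff.mpr hx_top
  obtain ⟨q, hq⟩ := exists_prime_orderOf_dvd_card' (G := A ⧸ zpowers x) p
    ((hA.to_quotient _).card_eq_or_dvd.resolve_left Finite.one_lt_card.ne')
  obtain ⟨y, rfl⟩ := QuotientGroup.mk_surjective q
  have hy : y ∉ zpowers x := fun h => by
    rw [(QuotientGroup.eq_one_iff y).mpr h, orderOf_one] at hq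
    exact (Fact.out : p.Prime).ne_one hq.symm
  obtain ⟨k, hk : x ^ k = y ^ p⟩ : y ^ p ∈ zpowers x := by
    rw [← QuotientGroup.eq_one_iff, QuotientGroup.mk_pow, ← hq, pow_orderOf_eq_one]
  obtain ⟨m, hm⟩ : p ∣ orderOf x :=
    hx ▸ hq ▸ (orderOf_map_dvd (QuotientGroup.mk' _) y).trans (Monoid.order_dvd_exponent y)
  -- `x ^ (k * m) = y ^ (p * m) = 1` since `p * m` is the exponent, so `p * m ∣ k * m`
  have hpk : (p : ℤ) ∣ k := by
    have hm0 : (m : ℤ) ≠ 0 := by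
      have := orderOf_pos x
      rw [hm] at this
      exact_mod_cast (Nat.pos_of_mul_pos_left this).ne'
    refine (mul_dvd_mul_iff_right hm0).mp ?_
    rw [← Nat.cast_mul, ← hm, orderOf_dvd_iff_zpow_eq_one, zpow_mul, hk, zpow_natCast,
      ← pow_mul, ← hm, hx, Monoid.pow_exponent_eq_one]
  obtain ⟨j, rfl⟩ := hpk
  have hyz : y = y * (x ^ j)⁻¹ * x ^ j := by group
  refine ⟨y * (x ^ j)⁻¹, orderOf_eq_prime ?_ ?_, ?_⟩
  · rw [mul_pow, inv_pow, ← zpow_natCast (x ^ j), ← zpow_mul, mul_comm j, hk, mul_inv_cancel]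
  · exact fun h => hy (by rw [hyz, h, one_mul]; exact zpow_mem_zpowers x j)
  · exact fun h => hy (hyz ▸ mul_mem h (zpow_mem_zpowers x j))

theorem IsPGroup.exists_isAntichain_ncard_eq_add_two (hA : IsPGroup p A) (hnc : ¬IsCyclic A)
    (hcard : p ^ 3 ≤ Nat.card A) :
    ∃ S : Set (Subgroup A), IsAntichain (· ≤ ·) S ∧ S.ncard = p + 2 := by
  have hp : p.Prime := Fact.out
  obtain ⟨x, hx⟩ := Monoid.exists_orderOf_eq_exponent (Monoid.ExponentExists.of_finite (G := A))
  obtain ⟨z, hz, hzx⟩ :=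
    hA.exists_orderOf_eq_prime_notMem_zpowers hx fun h => hnc ⟨x, (eq_top_iff' _).mp h⟩
  have hxz := disjoint_zpowers_of_prime (hz ▸ hp) hzx
  have hpx : p ∣ orderOf x := hx ▸ hz ▸ Monoid.order_dvd_exponent z
  by_cases hp2 : p ^ 2 ∣ orderOf x
  · set y := x ^ (orderOf x / p) with hy_def
    have hy : orderOf y = p := orderOf_pow_orderOf_div (orderOf_pos x).ne' hpx
    have hyz : y ∉ zpowers z := fun h => by
      have hy1 : y = 1 := disjoint_def.mp hxz (pow_mem (mem_zpowers x) _) h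
      rw [hy1, orderOf_one] at hy
      exact hp.ne_one hy.symm
    refine exists_isAntichain_ncard_eq_add_two_of_disjoint_zpowers (w := y * z) hxz hpx hz ?_ ?_ ?_
    · refine orderOf_eq_prime ?_ fun h => hyz ?_
      · rw [mul_pow, ← hy, pow_orderOf_eq_one, one_mul, hy, ← hz, pow_orderOf_eq_one]
      · rw [eq_inv_of_mul_eq_one_left h]
        exact inv_mem (mem_zpowers z)
    · exact fun h => hyz (by simpa using mul_mem h (inv_mem (mem_zpowers z)))
    · intro i h
      obtain ⟨k, h1, h2⟩ := exists_zmod_of_mem_zpowers hxz hpx hz.symm.dvd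
        (a := (orderOf x / p : ℕ)) (b := 1) (c := 1) (d := i)
        (by simpa only [hy_def, zpow_one, zpow_natCast] using h)
      have hy0 : ((orderOf x / p : ℕ) : ZMod p) = 0 := (ZMod.natCast_eq_zero_iff _ _).mpr
        ((Nat.dvd_div_iff_mul_dvd hpx).mpr (sq p ▸ hp2))
      simp only [Int.cast_natCast, Int.cast_one, mul_one, hy0] at h1 h2
      exact one_ne_zero (by linear_combination h2 - (i : ZMod p) * h1)
  · have hx_p : orderOf x = p := by
      obtain ⟨n, hn⟩ := IsPGroup.iff_orderOf.mp hA x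
      rw [hn] at hpx hp2 ⊢
      have h1 : 1 ≤ n := (Nat.pow_dvd_pow_iff_le_right hp.one_lt).mp (by rwa [pow_one])
      have h2 : ¬2 ≤ n := fun h => hp2 (Nat.pow_dvd_pow p h)
      rw [show n = 1 by omega, pow_one]
    obtain ⟨u, hu⟩ : ∃ u, u ∉ zpowers x ⊔ zpowers z := by
      by_contra! hJ
      have hJ_card := card_sup_le_mul (zpowers x) (zpowers z)
      rw [(eq_top_iff' _).mpr hJ, card_top, Nat.card_zpowers, Nat.card_zpowers, hx_p, hz] at hJ_card
      have : p * p < p ^ 3 := by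
        rw [← sq]; exact Nat.pow_lt_pow_right hp.one_lt (by norm_num)
      omega
    have hu_p : orderOf u = p := by
      refine orderOf_eq_prime ?_ fun h => hu (h ▸ one_mem _)
      rw [← hx_p, hx, Monoid.pow_exponent_eq_one]
    refine exists_isAntichain_ncard_eq_add_two_of_disjoint_zpowers hxz hpx hz hu_p
      (fun h => hu (mem_sup_right h)) fun i h => hu (zpowers_le.mpr ?_ h)
    exact mul_mem (mem_sup_left (mem_zpowers x)) (pow_mem (mem_sup_right (mem_zpowers z)) i)

theorem IsThinPGroup.card_eq_sq (hthin : IsThinPGroup p A) (hA : IsPGroup p A)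
    (hnc : ¬IsCyclic A) : Nat.card A = p ^ 2 := by
  have hp : p.Prime := Fact.out
  obtain ⟨n, hn⟩ := IsPGroup.iff_card.mp hA
  have hn3 : n < 3 := by
    by_contra! h
    obtain ⟨S, hS, hS_card⟩ := hA.exists_isAntichain_ncard_eq_add_two hnc
      (hn ▸ Nat.pow_le_pow_right hp.pos h)
    have := hthin S (fun N _ => normal_of_isMulCommutative N) hS
    omega
  interval_cases n
  · have : Subsingleton A := (Nat.card_eq_one_iff_unique.mp (pow_zero p ▸ hn)).1
    exact absurd isCyclic_of_subsingleton hnc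
  · exact absurd (isCyclic_of_prime_card (pow_one p ▸ hn)) hnc
  · exact hn

end FiniteCommGroup

/-- In a nonabelian finite thin `p`-group, the Frattini subgroup equals the commutator
subgroup, and the abelianization is elementary abelian of order `p ^ 2`. -/
theorem thin_p_group_frattini_eq_commutator
    {p : ℕ} (hp : p.Prime) {G : Type*} [Group G] [Finite G]
    (hpG : IsPGroup p G) (hthin : IsThinPGroup p G)
    (hna : ∃ a b : G, a * b ≠ b * a) :
    frattini G = commutator G ∧
    Nat.card (G ⧸ commutator G) = p ^ 2 ∧
    ∀ x : G ⧸ commutator G, x ^ p = 1 := by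
  have : Fact p.Prime := ⟨hp⟩
  have : Group.IsNilpotent G := hpG.isNilpotent
  have hof : Function.Surjective (Abelianization.of (G := G)) := QuotientGroup.mk_surjective
  have hnc : ¬IsCyclic (Abelianization G) := fun h => by
    have : IsCyclic (G ⧸ commutator G) := h
    have : IsCyclic G := IsCyclic.of_quotient_of_le_frattini commutator_le_frattini
    obtain ⟨a, b, hab⟩ := hna
    exact hab (IsCyclic.commGroup.mul_comm a b)
  have hcard : Nat.card (Abelianization G) = p ^ 2 :=
    (hthin.of_surjective _ hof).card_eq_sq (hpG.to_quotient _) hnc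
  refine ⟨le_antisymm ?_ commutator_le_frattini, hcard, fun x => ?_⟩
  · have := frattini_le_comap_frattini_of_surjective hof
    rwa [frattini_eq_bot_of_card_eq_sq hcard hnc, MonoidHom.comap_bot,
      Abelianization.ker_of] at this
  · rcases eq_or_ne x 1 with rfl | hx
    · exact one_pow p
    · exact orderOf_eq_prime_of_card_eq_sq hcard hnc hx ▸ pow_orderOf_eq_one x
end

section
/- Let G be a group, let M be a normal abelian subgroup of G such that every element of M commutes with every element of the commutator subgroup [G, G], and let δ : G → M be a derivation with respect to the conjugation action. Then for all g, h ∈ G, δ([g, h]) = [δ(g), h]·[g, δ(h)], where [a, b] = a⁻¹b⁻¹ab. -/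
/-!
Put `c = [g, h]`, so that `g * h = h * g * c`. Since `c ∈ [G, G]` commutes with `δ (h * g) ∈ M`,
the derivation rule gives `δ (g * h) = δ (h * g) * δ c`, hence `δ c = δ (h * g)⁻¹ * δ (g * h)`.
Expanding both sides with the derivation rule and reordering the two conjugates
`h⁻¹ * δ g * h` and `g⁻¹ * δ h * g`, which lie in the abelian group `M`, yields the formula.
-/

section Derivation

variable {G : Type*} [Group G] {M : Subgroup G} {δ : G → M}

theorem conj_derivation_mem
    (hδ : ∀ g h : G, (δ (g * h) : G) = h⁻¹ * (δ g : G) * h * (δ h : G)) (x y : G) :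
    x⁻¹ * (δ y : G) * x ∈ M := by
  have hconj : x⁻¹ * (δ y : G) * x = δ (y * x) * (δ x : G)⁻¹ := by
    rw [hδ]
    group
  rw [hconj]
  exact mul_mem (δ _).2 (inv_mem (δ x).2)

theorem derivation_mul_of_commute
    (hδ : ∀ g h : G, (δ (g * h) : G) = h⁻¹ * (δ g : G) * h * (δ h : G)) {x c : G}
    (hc : Commute (δ x : G) c) : (δ (x * c) : G) = δ x * δ c := by
  rw [hδ, hc.symm.inv_mul_cancel]

end Derivation

theorem derivation_commutator_formula_general
    {G : Type*} [Group G] (M : Subgroup G)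
    (hab : ∀ a b : G, a ∈ M → b ∈ M → a * b = b * a)
    (hcomm : ∀ m : G, m ∈ M → ∀ c : G, c ∈ commutator G → m * c = c * m)
    (δ : G → M)
    (hδ : ∀ g h : G, (δ (g * h) : G) = h⁻¹ * (δ g : G) * h * (δ h : G)) :
    ∀ g h : G,
      (δ (g⁻¹ * h⁻¹ * g * h) : G) =
        ((δ g : G)⁻¹ * h⁻¹ * (δ g : G) * h) * (g⁻¹ * (δ h : G)⁻¹ * g * (δ h : G)) := by
  intro g h
  have hc : g⁻¹ * h⁻¹ * g * h ∈ commutator G := by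
    rw [commutator_def]
    simpa [commutatorElement_def] using Subgroup.commutator_mem_commutator
      (Subgroup.mem_top g⁻¹) (Subgroup.mem_top h⁻¹)
  have hδc : (δ (h * g) : G) * δ (g⁻¹ * h⁻¹ * g * h) = δ (g * h) := by
    rw [← derivation_mul_of_commute hδ (hcomm _ (δ _).2 _ hc)]
    group
  have hconj : Commute (g⁻¹ * (δ h : G) * g) (h⁻¹ * (δ g : G) * h) :=
    hab _ _ (conj_derivation_mem hδ g h) (conj_derivation_mem hδ h g)
  rw [eq_inv_mul_of_mul_eq hδc, hδ, hδ]
  calc (g⁻¹ * (δ h : G) * g * (δ g : G))⁻¹ * (h⁻¹ * (δ g : G) * h * (δ h : G))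
      = (δ g : G)⁻¹ * ((g⁻¹ * (δ h : G) * g)⁻¹ * (h⁻¹ * (δ g : G) * h)) * (δ h : G) := by
        group
    _ = (δ g : G)⁻¹ * ((h⁻¹ * (δ g : G) * h) * (g⁻¹ * (δ h : G) * g)⁻¹) * (δ h : G) := by
        rw [hconj.inv_left.eq]
    _ = _ := by group

/-- If `M` is a normal abelian subgroup of `G` whose elements commute with every element of
the commutator subgroup `[G, G]`, and `δ : G → M` is a derivation for the conjugation
action, then `δ([g, h]) = [δ g, h] * [g, δ h]`, where `[a, b] = a⁻¹ * b⁻¹ * a * b`. -/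
theorem derivation_commutator_formula
    {G : Type*} [Group G] (M : Subgroup G) (hM : M.Normal)
    (hab : ∀ a b : G, a ∈ M → b ∈ M → a * b = b * a)
    (hcomm : ∀ m : G, m ∈ M → ∀ c : G, c ∈ commutator G → m * c = c * m)
    (δ : G → M)
    (hδ : ∀ g h : G, (δ (g * h) : G) = h⁻¹ * (δ g : G) * h * (δ h : G)) :
    ∀ g h : G,
      (δ (g⁻¹ * h⁻¹ * g * h) : G) =
        ((δ g : G)⁻¹ * h⁻¹ * (δ g : G) * h) * (g⁻¹ * (δ h : G)⁻¹ * g * (δ h : G)) :=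
  derivation_commutator_formula_general M hab hcomm δ hδ
end

section
/- Let p be a prime, let G be a group, let M be a normal abelian subgroup of G such that [m, g] ∈ Z(G) for every m ∈ M and g ∈ G, and let δ : G → M be a derivation with respect to the conjugation action. Then for every g ∈ G, δ(g^p) = δ(g)^p · [δ(g), g]^(p(p−1)/2), where [a, b] = a⁻¹b⁻¹ab. -/
/-!
Write `d = δ g` and `c = [d, g]`. Then `g⁻¹ d g = d c`, and since `c` is central, conjugating `d`
by `gⁿ` gives `d cⁿ`. The derivation rule `δ (g gⁿ) = (gⁿ)⁻¹ d gⁿ · δ (gⁿ)` therefore multiplies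
`δ (gⁿ)` by `d cⁿ` at each step, so `δ (gⁿ) = dⁿ c^(n choose 2)`.
-/

section Derivation

variable {G : Type*} [Group G]

theorem derivation_one {δ : G → G} (hδ : ∀ g h : G, δ (g * h) = h⁻¹ * δ g * h * δ h) :
    δ 1 = 1 := by
  have h := hδ 1 1
  simp only [mul_one, one_mul, inv_one] at h
  exact left_eq_mul.mp h

theorem conj_pow_eq_mul_pow_of_mem_center {g d c : G} (hc : c ∈ Subgroup.center G)
    (hgd : g⁻¹ * d * g = d * c) (n : ℕ) : (g ^ n)⁻¹ * d * g ^ n = d * c ^ n := by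
  induction n with
  | zero => simp
  | succ n ih =>
    have hcn : g * c ^ n = c ^ n * g := Subgroup.mem_center_iff.mp (Subgroup.pow_mem _ hc n) g
    calc (g ^ (n + 1))⁻¹ * d * g ^ (n + 1)
        = g⁻¹ * ((g ^ n)⁻¹ * d * g ^ n) * g := by group
      _ = g⁻¹ * d * g * c ^ n := by simp only [ih, mul_assoc, ← hcn]
      _ = d * c ^ (n + 1) := by rw [hgd, pow_succ', mul_assoc]

theorem derivation_pow_of_commutator_mem_center {δ : G → G}
    (hδ : ∀ g h : G, δ (g * h) = h⁻¹ * δ g * h * δ h) {g : G}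
    (hc : (δ g)⁻¹ * g⁻¹ * δ g * g ∈ Subgroup.center G) (n : ℕ) :
    δ (g ^ n) = δ g ^ n * ((δ g)⁻¹ * g⁻¹ * δ g * g) ^ n.choose 2 := by
  have hgd : g⁻¹ * δ g * g = δ g * ((δ g)⁻¹ * g⁻¹ * δ g * g) := by group
  set d := δ g
  set c := d⁻¹ * g⁻¹ * d * g
  induction n with
  | zero => simp [derivation_one hδ]
  | succ n ih =>
    have hcn : c ^ n * d ^ n = d ^ n * c ^ n :=
      (Subgroup.mem_center_iff.mp (Subgroup.pow_mem _ hc n) (d ^ n)).symm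
    calc δ (g ^ (n + 1))
        = (g ^ n)⁻¹ * d * g ^ n * δ (g ^ n) := by rw [pow_succ', hδ]
      _ = d * (c ^ n * d ^ n) * c ^ n.choose 2 := by
        rw [conj_pow_eq_mul_pow_of_mem_center hc hgd, ih]; group
      _ = d ^ (n + 1) * c ^ (n + 1).choose 2 := by
        rw [hcn, Nat.choose_succ_succ, Nat.choose_one_right, pow_add, pow_succ']; group

end Derivation

theorem derivation_pow_p_formula_general
    {p : ℕ} {G : Type*} [Group G] (M : Subgroup G)
    (hz : ∀ m : G, m ∈ M → ∀ g : G, m⁻¹ * g⁻¹ * m * g ∈ Subgroup.center G)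
    (δ : G → M)
    (hδ : ∀ g h : G, (δ (g * h) : G) = h⁻¹ * (δ g : G) * h * (δ h : G)) :
    ∀ g : G,
      (δ (g ^ p) : G) =
        (δ g : G) ^ p * ((δ g : G)⁻¹ * g⁻¹ * (δ g : G) * g) ^ (p * (p - 1) / 2) := by
  intro g
  rw [← Nat.choose_two_right]
  exact derivation_pow_of_commutator_mem_center (δ := fun x => (δ x : G)) hδ (hz _ (δ g).2 g) p

/-- If `M` is a normal abelian subgroup of `G` with `[m, g] ∈ Z(G)` for all `m ∈ M`, `g ∈ G`,
and `δ : G → M` is a derivation for the conjugation action, then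
`δ (g ^ p) = δ g ^ p * [δ g, g] ^ (p * (p - 1) / 2)`, where `[a, b] = a⁻¹ * b⁻¹ * a * b`. -/
theorem derivation_pow_p_formula
    {p : ℕ} (hp : p.Prime) {G : Type*} [Group G] (M : Subgroup G) (hM : M.Normal)
    (hab : ∀ a b : G, a ∈ M → b ∈ M → a * b = b * a)
    (hz : ∀ m : G, m ∈ M → ∀ g : G, m⁻¹ * g⁻¹ * m * g ∈ Subgroup.center G)
    (δ : G → M)
    (hδ : ∀ g h : G, (δ (g * h) : G) = h⁻¹ * (δ g : G) * h * (δ h : G)) :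
    ∀ g : G,
      (δ (g ^ p) : G) =
        (δ g : G) ^ p * ((δ g : G)⁻¹ * g⁻¹ * (δ g : G) * g) ^ (p * (p - 1) / 2) :=
  derivation_pow_p_formula_general M hz δ hδ
end
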